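/- Fix a group Γ and an integer n ≥ 2, and let H_n(Γ) = Γ^n ⋊ Σ_n be the semidirect product of the n-fold direct power Γ^n with the symmetric group Σ_n on n letters, where Σ_n acts on Γ^n by permuting the coordinates. Then there is an action of H_n(Γ) on the ℤ-algebra A_n(Γ) by ℤ-algebra automorphisms such that: (i) each permutation s ∈ Σ_n sends t_{i,j,γ} to t_{s(i),s(j),γ}; (ii) for μ ∈ Γ, the n-tuple μ(m) ∈ Γ^n having μ in the m-th coordinate and 1 elsewhere sends t_{i,j,γ} to t_{i,j,γ} whenever m ∉ {i,j}, and μ(i) sends t_{i,j,γ} to t_{i,j,μγ} (consequently μ(j) sends t_{i,j,γ} to t_{i,j,γμ⁻¹}). -/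

import Mathlib

noncomputable section

/-- Index type for the generators `t_{i,j,γ}`: pairs of distinct indices together with a
group element label. -/
def Idx (n : ℕ) (Γ : Type*) : Type _ := {p : Fin n × Fin n × Γ // p.1 ≠ p.2.1}

/-- The generator `t_{i,j,γ}` of the free associative `ℤ`-algebra. -/
def faGen (n : ℕ) (Γ : Type*) (i j : Fin n) (γ : Γ) (h : i ≠ j) :
    FreeAlgebra ℤ (Idx n Γ) :=
  FreeAlgebra.ι ℤ ⟨(i, j, γ), h⟩

/-- The relations (A0), (A1), (A2) defining `A_n(Γ)`. -/
inductive ARel (n : ℕ) (Γ : Type*) [Group Γ] :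
    FreeAlgebra ℤ (Idx n Γ) → FreeAlgebra ℤ (Idx n Γ) → Prop
  | inv : ∀ (i j : Fin n) (γ : Γ) (h : i ≠ j),
      ARel n Γ (faGen n Γ i j γ h) (faGen n Γ j i γ⁻¹ h.symm)
  | comm : ∀ (i j k l : Fin n) (γ δ : Γ) (hij : i ≠ j) (hkl : k ≠ l),
      i ≠ k → i ≠ l → j ≠ k → j ≠ l →
      ARel n Γ (faGen n Γ i j γ hij * faGen n Γ k l δ hkl)
               (faGen n Γ k l δ hkl * faGen n Γ i j γ hij)
  | inf : ∀ (i j k : Fin n) (γ δ : Γ) (hij : i ≠ j) (hjk : j ≠ k) (hik : i ≠ k),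
      ARel n Γ (faGen n Γ i j γ hij * (faGen n Γ j k δ hjk + faGen n Γ i k (γ * δ) hik))
               ((faGen n Γ j k δ hjk + faGen n Γ i k (γ * δ) hik) * faGen n Γ i j γ hij)

/-- The associative unital `ℤ`-algebra `A_n(Γ)`: the quotient of the free `ℤ`-algebra on the
symbols `t_{i,j,γ}` by the two-sided ideal generated by the relations (A0), (A1), (A2). -/
abbrev An (n : ℕ) (Γ : Type*) [Group Γ] := RingQuot (ARel n Γ)

/-- The generator `t_{i,j,γ}` of `A_n(Γ)`. -/
def tA (n : ℕ) (Γ : Type*) [Group Γ] (i j : Fin n) (γ : Γ) (h : i ≠ j) : An n Γ :=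
  RingQuot.mkAlgHom ℤ (ARel n Γ) (faGen n Γ i j γ h)


/-- The action of the symmetric group `Σ_n` on `Γ^n` permuting the coordinates:
`(s • μ) i = μ (s⁻¹ i)`. -/
def permAct (n : ℕ) (Γ : Type*) [Group Γ] :
    Equiv.Perm (Fin n) →* MulAut (Fin n → Γ) where
  toFun s :=
    { toFun := fun μ => μ ∘ s.symm
      invFun := fun μ => μ ∘ s
      left_inv := fun μ => by ext x; simp
      right_inv := fun μ => by ext x; simp
      map_mul' := fun μ ν => rfl }
  map_one' := by
    apply MulEquiv.ext
    intro μ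
    funext x
    rfl
  map_mul' := fun s t => by
    apply MulEquiv.ext
    intro μ
    funext x
    rfl

/-!
An element `g = (λ, s)` of `Γⁿ ⋊ Σ_n` acts by `t_{i,j,γ} ↦ t_{s i, s j, λ_{s i} γ λ_{s j}⁻¹}`.
The labels of a product `t_{i,j,γ} t_{j,k,δ}` telescope to `λ_{s i} γδ λ_{s k}⁻¹`, so the
relations (A0)–(A2) are mapped to relations of the same kind, and this rule composes exactly
like the multiplication of the semidirect product.
-/

namespace An

variable {n : ℕ} {Γ : Type*} [Group Γ]

lemma tA_eq_tA_inv (i j : Fin n) (γ : Γ) (h : i ≠ j) :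
    tA n Γ i j γ h = tA n Γ j i γ⁻¹ h.symm :=
  RingQuot.mkAlgHom_rel ℤ (ARel.inv i j γ h)

lemma tA_mul_tA_comm {i j k l : Fin n} (γ δ : Γ) (hij : i ≠ j) (hkl : k ≠ l)
    (hik : i ≠ k) (hil : i ≠ l) (hjk : j ≠ k) (hjl : j ≠ l) :
    tA n Γ i j γ hij * tA n Γ k l δ hkl = tA n Γ k l δ hkl * tA n Γ i j γ hij := by
  simpa only [tA, map_mul] using
    RingQuot.mkAlgHom_rel ℤ (ARel.comm i j k l γ δ hij hkl hik hil hjk hjl)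

lemma tA_mul_add_comm {i j k : Fin n} (γ δ : Γ) (hij : i ≠ j) (hjk : j ≠ k) (hik : i ≠ k) :
    tA n Γ i j γ hij * (tA n Γ j k δ hjk + tA n Γ i k (γ * δ) hik) =
      (tA n Γ j k δ hjk + tA n Γ i k (γ * δ) hik) * tA n Γ i j γ hij := by
  simpa only [tA, map_mul, map_add] using
    RingQuot.mkAlgHom_rel ℤ (ARel.inf i j k γ δ hij hjk hik)

lemma algHom_ext {B : Type*} [Semiring B] [Algebra ℤ B] {f g : An n Γ →ₐ[ℤ] B}
    (h : ∀ (i j : Fin n) (γ : Γ) (hij : i ≠ j), f (tA n Γ i j γ hij) = g (tA n Γ i j γ hij)) :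
    f = g :=
  RingQuot.ringQuot_ext' ℤ f g (FreeAlgebra.hom_ext (funext fun p => h _ _ _ p.2))

def lift {B : Type*} [Semiring B] [Algebra ℤ B] (x : (i j : Fin n) → Γ → i ≠ j → B)
    (hinv : ∀ (i j : Fin n) (γ : Γ) (h : i ≠ j), x i j γ h = x j i γ⁻¹ h.symm)
    (hcomm : ∀ (i j k l : Fin n) (γ δ : Γ) (hij : i ≠ j) (hkl : k ≠ l),
      i ≠ k → i ≠ l → j ≠ k → j ≠ l → x i j γ hij * x k l δ hkl = x k l δ hkl * x i j γ hij)
    (hinf : ∀ (i j k : Fin n) (γ δ : Γ) (hij : i ≠ j) (hjk : j ≠ k) (hik : i ≠ k),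
      x i j γ hij * (x j k δ hjk + x i k (γ * δ) hik) =
        (x j k δ hjk + x i k (γ * δ) hik) * x i j γ hij) :
    An n Γ →ₐ[ℤ] B :=
  RingQuot.liftAlgHom ℤ
    ⟨FreeAlgebra.lift ℤ fun p : Idx n Γ => x p.1.1 p.1.2.1 p.1.2.2 p.2, by
      have lift_faGen : ∀ i j γ (h : i ≠ j), FreeAlgebra.lift ℤ
          (fun p : Idx n Γ => x p.1.1 p.1.2.1 p.1.2.2 p.2) (faGen n Γ i j γ h) = x i j γ h :=
        fun _ _ _ _ => FreeAlgebra.lift_ι_apply _ _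
      intro a b hab
      induction hab with
      | inv i j γ h => simpa only [lift_faGen] using hinv i j γ h
      | comm i j k l γ δ hij hkl h₁ h₂ h₃ h₄ =>
        simpa only [map_mul, lift_faGen] using hcomm i j k l γ δ hij hkl h₁ h₂ h₃ h₄
      | inf i j k γ δ hij hjk hik =>
        simpa only [map_mul, map_add, lift_faGen] using hinf i j k γ δ hij hjk hik⟩

@[simp]
lemma lift_tA {B : Type*} [Semiring B] [Algebra ℤ B] (x : (i j : Fin n) → Γ → i ≠ j → B)
    (hinv hcomm hinf) (i j : Fin n) (γ : Γ) (h : i ≠ j) :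
    lift x hinv hcomm hinf (tA n Γ i j γ h) = x i j γ h :=
  (RingQuot.liftAlgHom_mkAlgHom_apply ..).trans (FreeAlgebra.lift_ι_apply _ _)

variable (n Γ) in
abbrev Hn : Type _ := (Fin n → Γ) ⋊[permAct n Γ] Equiv.Perm (Fin n)

def smulGen (g : Hn n Γ) (i j : Fin n) (γ : Γ) (h : i ≠ j) : An n Γ :=
  tA n Γ (g.right i) (g.right j) (g.left (g.right i) * γ * (g.left (g.right j))⁻¹)
    (g.right.injective.ne h)

def actAlgHom (g : Hn n Γ) : An n Γ →ₐ[ℤ] An n Γ :=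
  lift (smulGen g)
    (fun i j γ h => by
      rw [smulGen, smulGen, tA_eq_tA_inv]
      congr 1
      group)
    (fun i j k l γ δ hij hkl hik hil hjk hjl =>
      tA_mul_tA_comm _ _ _ _ (g.right.injective.ne hik) (g.right.injective.ne hil)
        (g.right.injective.ne hjk) (g.right.injective.ne hjl))
    (fun i j k γ δ hij hjk hik => by
      have telescope : g.left (g.right i) * γ * (g.left (g.right j))⁻¹ *
          (g.left (g.right j) * δ * (g.left (g.right k))⁻¹) =
          g.left (g.right i) * (γ * δ) * (g.left (g.right k))⁻¹ := by group
      simp only [smulGen]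
      rw [← telescope]
      exact tA_mul_add_comm _ _ _ _ _)

@[simp]
lemma actAlgHom_tA (g : Hn n Γ) (i j : Fin n) (γ : Γ) (h : i ≠ j) :
    actAlgHom g (tA n Γ i j γ h) = smulGen g i j γ h :=
  lift_tA ..

lemma actAlgHom_one : actAlgHom (1 : Hn n Γ) = AlgHom.id ℤ (An n Γ) := by
  refine algHom_ext fun i j γ h => ?_
  simp [smulGen]

lemma actAlgHom_mul (g g' : Hn n Γ) :
    actAlgHom (g * g') = (actAlgHom g).comp (actAlgHom g') := by
  refine algHom_ext fun i j γ h => ?_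
  simp only [AlgHom.comp_apply, actAlgHom_tA, smulGen]
  congr 1
  simp only [SemidirectProduct.mul_left, SemidirectProduct.mul_right, Pi.mul_apply,
    Equiv.Perm.mul_apply, permAct, MonoidHom.coe_mk, OneHom.coe_mk, MulEquiv.coe_mk,
    Equiv.coe_fn_mk, Function.comp_apply, Equiv.symm_apply_apply]
  group

variable (n Γ) in
def act : Hn n Γ →* (An n Γ ≃ₐ[ℤ] An n Γ) :=
  (AlgEquiv.algHomUnitsEquiv ℤ (An n Γ)).toMonoidHom.comp
    (MonoidHom.toHomUnits ⟨⟨actAlgHom, actAlgHom_one⟩, actAlgHom_mul⟩)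

@[simp]
lemma act_apply (g : Hn n Γ) (a : An n Γ) : act n Γ g a = actAlgHom g a := rfl

end An

theorem statement11_general (Γ : Type*) [Group Γ] (n : ℕ) :
    ∃ Ψ : (Fin n → Γ) ⋊[permAct n Γ] Equiv.Perm (Fin n) →* (An n Γ ≃ₐ[ℤ] An n Γ),
      (∀ (s : Equiv.Perm (Fin n)) (i j : Fin n) (h : i ≠ j) (γ : Γ),
        Ψ (SemidirectProduct.inr s) (tA n Γ i j γ h) =
          tA n Γ (s i) (s j) γ (fun e => h (s.injective e))) ∧
      (∀ (μ : Γ) (m i j : Fin n) (h : i ≠ j), m ≠ i → m ≠ j → ∀ γ : Γ,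
        Ψ (SemidirectProduct.inl (Pi.mulSingle m μ)) (tA n Γ i j γ h) = tA n Γ i j γ h) ∧
      (∀ (μ : Γ) (i j : Fin n) (h : i ≠ j) (γ : Γ),
        Ψ (SemidirectProduct.inl (Pi.mulSingle i μ)) (tA n Γ i j γ h) =
          tA n Γ i j (μ * γ) h) ∧
      (∀ (μ : Γ) (i j : Fin n) (h : i ≠ j) (γ : Γ),
        Ψ (SemidirectProduct.inl (Pi.mulSingle j μ)) (tA n Γ i j γ h) =
          tA n Γ i j (γ * μ⁻¹) h) := by
  refine ⟨An.act n Γ, ?_, ?_, ?_, ?_⟩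
  · intro s i j h γ
    simp [An.smulGen]
  · intro μ m i j h hmi hmj γ
    simp [An.smulGen, Pi.mulSingle_eq_of_ne' hmi, Pi.mulSingle_eq_of_ne' hmj]
  · intro μ i j h γ
    simp [An.smulGen, Pi.mulSingle_eq_of_ne h.symm]
  · intro μ i j h γ
    simp [An.smulGen, Pi.mulSingle_eq_of_ne h]

/-- The group `H_n(Γ) = Γⁿ ⋊ Σ_n` acts on `A_n(Γ)` by `ℤ`-algebra
automorphisms so that a permutation `s` sends `t_{i,j,γ}` to `t_{s(i),s(j),γ}`, the tuple
`μ(m)` (with `μ` in coordinate `m` and `1` elsewhere) fixes `t_{i,j,γ}` when `m ∉ {i,j}`,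
`μ(i)` sends `t_{i,j,γ}` to `t_{i,j,μγ}`, and (consequently) `μ(j)` sends `t_{i,j,γ}` to
`t_{i,j,γμ⁻¹}`. -/
theorem statement11 (Γ : Type*) [Group Γ] (n : ℕ) (hn : 2 ≤ n) :
    ∃ Ψ : (Fin n → Γ) ⋊[permAct n Γ] Equiv.Perm (Fin n) →* (An n Γ ≃ₐ[ℤ] An n Γ),
      (∀ (s : Equiv.Perm (Fin n)) (i j : Fin n) (h : i ≠ j) (γ : Γ),
        Ψ (SemidirectProduct.inr s) (tA n Γ i j γ h) =
          tA n Γ (s i) (s j) γ (fun e => h (s.injective e))) ∧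
      (∀ (μ : Γ) (m i j : Fin n) (h : i ≠ j), m ≠ i → m ≠ j → ∀ γ : Γ,
        Ψ (SemidirectProduct.inl (Pi.mulSingle m μ)) (tA n Γ i j γ h) = tA n Γ i j γ h) ∧
      (∀ (μ : Γ) (i j : Fin n) (h : i ≠ j) (γ : Γ),
        Ψ (SemidirectProduct.inl (Pi.mulSingle i μ)) (tA n Γ i j γ h) =
          tA n Γ i j (μ * γ) h) ∧
      (∀ (μ : Γ) (i j : Fin n) (h : i ≠ j) (γ : Γ),
        Ψ (SemidirectProduct.inl (Pi.mulSingle j μ)) (tA n Γ i j γ h) =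
          tA n Γ i j (γ * μ⁻¹) h) :=
  statement11_general Γ n
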